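/- (Bijection between norm classes and conjugacy classes of admissible embeddings.) Let V be a nondegenerate n-dimensional hermitian space over K and E an étale F-algebra of degree n. The assignment sending a class [λ] ∈ E×/N_{K_E/E}(K_E×) with V_{E,λ} ≅ V to the U(V)-conjugacy class of the embedding i_r(x) = r ∘ M_x ∘ r⁻¹ (for any isometry r : V_{E,λ} → V) is a well-defined bijection from {[λ] ∈ E×/N_{K_E/E}(K_E×) : V_{E,λ} ≅ V} onto the set of admissible embeddings K_E¹ → U(V) modulo conjugation by U(V). -/

import Mathlib

open scoped TensorProduct

/-- The norm map `x ↦ x · conj x` on units of an algebra with involution. -/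
def normMap {F A : Type} [Field F] [CommRing A] [Algebra F A]
    (σ : A →ₐ[F] A) : Aˣ →* Aˣ :=
  (MonoidHom.id Aˣ) * (Units.map σ.toRingHom.toMonoidHom)

/-- The norm-one group `A¹ = {x ∈ A× : x · σ x = 1}`. -/
def normOneGroup {F A : Type} [Field F] [CommRing A] [Algebra F A]
    (σ : A →ₐ[F] A) : Subgroup Aˣ :=
  (normMap σ).ker

/-- The involution `σ = conj ⊗ id` on `K_E = K ⊗[F] E`. -/
noncomputable def tensorConj {F K E : Type} [Field F] [CommRing K] [Algebra F K]
    [CommRing E] [Algebra F E] (conj : K →ₐ[F] K) :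
    (K ⊗[F] E) →ₐ[F] (K ⊗[F] E) :=
  Algebra.TensorProduct.map conj (AlgHom.id F E)

/-- The hermitian form `⟨x,y⟩_μ = Tr_{K_E/K}(μ · x · σ(y))` on `K_E`. -/
noncomputable def hermFormOf {F K E : Type} [Field F] [CommRing K] [Algebra F K]
    [CommRing E] [Algebra F E] (conj : K →ₐ[F] K) (μ x y : K ⊗[F] E) : K :=
  Algebra.trace K (K ⊗[F] E) (μ * x * (tensorConj conj y))

section

variable (F K E V : Type) [Field F] [CommRing K] [Algebra F K]
  [CommRing E] [Algebra F E] [AddCommGroup V] [Module K V]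
  (conj : K →ₐ[F] K) (B : V → V → K)

/-- `r` is an isometry from `V_{E,λ}` onto `(V, B)`. -/
def IsIsometryTo (lam : Eˣ) (r : (K ⊗[F] E) ≃ₗ[K] V) : Prop :=
  ∀ x y : K ⊗[F] E,
    B (r x) (r y) = hermFormOf conj (Algebra.TensorProduct.includeRight (lam : E)) x y

/-- Elements `λ ∈ E×` such that `V_{E,λ} ≅ V` as hermitian spaces. -/
def ReprType : Type :=
  {lam : Eˣ // ∃ r : (K ⊗[F] E) ≃ₗ[K] V, IsIsometryTo F K E V conj B lam r}

/-- The relation "`λ'/λ` is a norm from `K_E`" on `ReprType`; the quotient by it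
is the set of norm classes `λ ∈ E×/N_{K_E/E}(K_E×)` with `V_{E,λ} ≅ V`. -/
def normRel (a b : ReprType F K E V conj B) : Prop :=
  ∃ y : (K ⊗[F] E)ˣ,
    Algebra.TensorProduct.includeRight ((b.val : Eˣ) : E)
      = Algebra.TensorProduct.includeRight ((a.val : Eˣ) : E)
        * ((y : K ⊗[F] E) * tensorConj conj (y : K ⊗[F] E))

/-- Admissible embeddings of the norm-one group `K_E¹` into the unitary group of
`(V, B)`: maps of the form `x ↦ r ∘ M_x ∘ r⁻¹` for an isometry
`r : V_{E,λ} → V`. -/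
def EmbType : Type :=
  {ι : normOneGroup (tensorConj conj) → (V ≃ₗ[K] V) //
    ∃ (lam : Eˣ) (r : (K ⊗[F] E) ≃ₗ[K] V), IsIsometryTo F K E V conj B lam r ∧
      ∀ (x : normOneGroup (tensorConj conj)) (v : K ⊗[F] E),
        (ι x) (r v) = r (x.val.val * v)}

/-- The relation of conjugacy by an element of the unitary group `U(V)`. -/
def conjRel (ι κ : EmbType F K E V conj B) : Prop :=
  ∃ h : V ≃ₗ[K] V, (∀ u v : V, B (h u) (h v) = B u v) ∧
    ∀ x : normOneGroup (tensorConj conj), κ.val x = h * ι.val x * h⁻¹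

end

/-!
An admissible embedding `ι` is *realized* for `λ` by an isometry `r : V_{E,λ} → V` when
`ι x ∘ r = r ∘ M_x`. Replacing `r` by `r ∘ M_y` (`y ∈ K_E×`) replaces `λ` by `λ y σ(y)`, and
replacing it by `h ∘ r` (`h ∈ U(V)`) conjugates `ι` by `h`; so realizability is compatible with
both equivalence relations. Conversely, two isometries `r, r'` realizing the same `ι` differ by
`r⁻¹ r'`, which commutes with `K_E¹`. Cayley transforms of skew elements show that `K_E¹`
generates `K_E` as a `K`-algebra, so `r⁻¹ r'` is multiplication by a unit `c`, and
nondegeneracy of the trace form gives `λ' = λ c σ(c)`. Two embeddings realized for the same `λ`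
are conjugate by `r' r⁻¹`. Hence realizability is the graph of a bijection between the two
quotients.
-/

section QuotEquiv

variable {α β : Type*} {r : α → α → Prop} {s : β → β → Prop}

theorem equivalence_of_forall_rel_iff (R : α → β → Prop) (hR : ∀ b, ∃ a, R a b)
    (hRs : ∀ {a b b'}, R a b → (R a b' ↔ s b b')) : Equivalence s where
  refl b := by
    obtain ⟨a, hab⟩ := hR b
    exact (hRs hab).mp hab
  symm {b b'} hbb' := by
    obtain ⟨a, hab⟩ := hR b
    exact (hRs ((hRs hab).mpr hbb')).mp hab
  trans {b b' b''} hbb' hb'b'' := by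
    obtain ⟨a, hab⟩ := hR b
    exact (hRs hab).mp ((hRs ((hRs hab).mpr hbb')).mpr hb'b'')

theorem Quot.exists_equiv_iff_of_rel (R : α → β → Prop)
    (hα : ∀ a, ∃ b, R a b) (hβ : ∀ b, ∃ a, R a b)
    (hRr : ∀ {a a' b}, R a b → (R a' b ↔ r a a'))
    (hRs : ∀ {a b b'}, R a b → (R a b' ↔ s b b')) :
    ∃ Φ : Quot r ≃ Quot s, ∀ a b, Φ (Quot.mk _ a) = Quot.mk _ b ↔ R a b := by
  have hr : Equivalence r := equivalence_of_forall_rel_iff (fun b a => R a b) hα hRr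
  have hs : Equivalence s := equivalence_of_forall_rel_iff R hβ hRs
  choose f hf using hα
  let Φ : Quot r → Quot s := Quot.lift (fun a => Quot.mk s (f a)) fun a a' haa' =>
    Quot.sound ((hRs (hf a)).mp ((hRr (hf a')).mpr (hr.symm haa')))
  have hΦ : ∀ a b, Φ (Quot.mk _ a) = Quot.mk _ b ↔ R a b := fun a b =>
    ⟨fun h => (hRs (hf a)).mpr ((hs.eqvGen_iff).mp (Quot.eqvGen_exact h)),
      fun h => Quot.sound ((hRs (hf a)).mp h)⟩
  refine ⟨Equiv.ofBijective Φ ⟨?_, ?_⟩, hΦ⟩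
  · rintro ⟨a⟩ ⟨a'⟩ h
    exact Quot.sound (hr.symm ((hRr (hf a')).mp ((hΦ a (f a')).mp h)))
  · rintro ⟨b⟩
    obtain ⟨a, hab⟩ := hβ b
    exact ⟨Quot.mk _ a, (hΦ a b).mpr hab⟩

end QuotEquiv

section NormOne

variable {F A : Type} [Field F] [CommRing A] [Algebra F A]

theorem mul_inv_map_mem_normOneGroup {σ : A →ₐ[F] A} (hσ : ∀ x, σ (σ x) = x) (u : Aˣ) :
    u * (Units.map σ.toRingHom.toMonoidHom u)⁻¹ ∈ normOneGroup σ := by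
  have hσσ : Units.map σ.toRingHom.toMonoidHom (Units.map σ.toRingHom.toMonoidHom u) = u :=
    Units.ext (hσ u)
  change normMap σ _ = 1
  simp only [normMap, MonoidHom.mul_apply, MonoidHom.id_apply, map_mul, map_inv, hσσ]
  simp [mul_comm, mul_left_comm]

theorem Subalgebra.inv_mem_of_isUnit [Module.Finite F A] (S : Subalgebra F A) (u : Aˣ)
    (hu : (u : A) ∈ S) : ((u⁻¹ : Aˣ) : A) ∈ S := by
  have : IsArtinianRing S := isArtinian_of_tower F inferInstance
  have hreg : (⟨u, hu⟩ : S) ∈ nonZeroDivisors S :=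
    comap_nonZeroDivisors_le_of_injective (f := S.val) Subtype.val_injective
      (show (u : A) ∈ nonZeroDivisors A from u.isUnit.mem_nonZeroDivisors)
  obtain ⟨v, hv⟩ := IsArtinianRing.isUnit_of_mem_nonZeroDivisors hreg
  have huv : (u : A) * ((v⁻¹ : Sˣ) : S) = 1 := by
    rw [show (u : A) = ((v : S) : A) by rw [hv], ← Subalgebra.coe_mul, v.mul_inv,
      Subalgebra.coe_one]
  exact Units.inv_eq_of_mul_eq_one_right huv ▸ ((v⁻¹ : Sˣ) : S).2

end NormOne

section Skew

variable {F A : Type} [Field F] [CommRing A] [Algebra F A] [Module.Finite F A]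

theorem spectrum_finite_of_moduleFinite (a : A) : (spectrum F a).Finite := by
  refine (Module.End.finite_spectrum (Algebra.lmul F A a)).subset fun t ht => ?_
  rw [spectrum.mem_iff] at ht ⊢
  rwa [← (Algebra.lmul F A).commutes, ← map_sub, Algebra.lmul_isUnit_iff]

/-- The Cayley transform `x = (t + w)/(t - w)` of a skew element `w` has norm one and
`(x + 1)/2t = (t - w)⁻¹`; a suitable `t` exists since spectra are finite and `F` is infinite. -/
theorem mem_of_normOneGroup_subset_of_map_eq_neg [Infinite F] (hchar : (2 : F) ≠ 0)
    {σ : A →ₐ[F] A} (hσ : ∀ x, σ (σ x) = x) (S : Subalgebra F A)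
    (hS : ∀ x ∈ normOneGroup σ, (x : A) ∈ S) {w : A} (hw : σ w = -w) : w ∈ S := by
  obtain ⟨t, ht⟩ : ({0} ∪ spectrum F w ∪ spectrum F (-w))ᶜ.Nonempty :=
    (((Set.finite_singleton 0).union (spectrum_finite_of_moduleFinite w)).union
      (spectrum_finite_of_moduleFinite (-w))).infinite_compl.nonempty
  simp only [Set.mem_compl_iff, Set.mem_union, Set.mem_singleton_iff, not_or,
    spectrum.notMem_iff, sub_neg_eq_add] at ht
  obtain ⟨⟨ht0, hq⟩, hp⟩ := ht
  have hσp : Units.map σ.toRingHom.toMonoidHom hp.unit = hq.unit := by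
    ext
    simp [hw, sub_eq_add_neg]
  have hx := hS _ (mul_inv_map_mem_normOneGroup hσ hp.unit)
  rw [hσp] at hx
  have hq_inv : ((hq.unit⁻¹ : Aˣ) : A) ∈ S := by
    have h2t : (2 * t : F) ≠ 0 := mul_ne_zero hchar ht0
    convert S.smul_mem (S.add_mem hx S.one_mem) (2 * t)⁻¹ using 1
    have hc : algebraMap F A (2 * t)⁻¹ * (2 * algebraMap F A t) = 1 := by
      rw [← map_ofNat (algebraMap F A), ← map_mul, ← map_mul, inv_mul_cancel₀ h2t, map_one]
    rw [Algebra.smul_def, Units.val_mul, hp.unit_spec]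
    linear_combination algebraMap F A (2 * t)⁻¹ * hq.mul_val_inv - ((hq.unit⁻¹ : Aˣ) : A) * hc
  have hq_mem : algebraMap F A t - w ∈ S := by
    simpa using S.inv_mem_of_isUnit hq.unit⁻¹ hq_inv
  simpa using S.sub_mem (S.algebraMap_mem t) hq_mem

end Skew

section QuadraticAlgebra

variable {F K : Type} [Field F] [CommRing K] [Algebra F K]

/-- `δ = k - conj k` for any `k` not fixed by `conj`: `δ²` lies in `F`, and is nonzero since
the trace form of `K` is nondegenerate while a square-zero `δ` would make every `δ y` nilpotent. -/
theorem exists_isUnit_map_eq_neg (hK2 : Module.finrank F K = 2)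
    (hKet : ∀ x : K, x ≠ 0 → ∃ y : K, Algebra.trace F K (x * y) ≠ 0)
    {conj : K →ₐ[F] K} (hconj : ∀ x, conj (conj x) = x)
    (hfix : ∀ x : K, conj x = x ↔ ∃ a : F, algebraMap F K a = x) :
    ∃ δ : K, IsUnit δ ∧ conj δ = -δ := by
  have : Module.Finite F K := Module.finite_of_finrank_eq_succ hK2
  have : Nontrivial K := Module.nontrivial_of_finrank_eq_succ hK2
  obtain ⟨k, hk⟩ : ∃ k, conj k ≠ k := by
    by_contra! h
    have hbot : (⊥ : Subalgebra F K) = ⊤ :=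
      eq_top_iff.mpr fun x _ => Algebra.mem_bot.mpr ((hfix x).mp (h x))
    rw [Subalgebra.bot_eq_top_iff_finrank_eq_one, hK2] at hbot
    exact absurd hbot (by norm_num)
  set δ := k - conj k
  have hskew : conj δ = -δ := by simp [δ, hconj]
  obtain ⟨a, ha⟩ := (hfix (δ * δ)).mp (by rw [map_mul, hskew, neg_mul_neg])
  have ha0 : a ≠ 0 := by
    rintro rfl
    obtain ⟨y, hy⟩ := hKet δ (sub_ne_zero.mpr hk.symm)
    have hnil : IsNilpotent (δ * y) := ⟨2, by rw [mul_pow, sq δ, ← ha, map_zero, zero_mul]⟩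
    exact hy (Algebra.isNilpotent_trace_of_isNilpotent hnil).eq_zero
  have hsq : IsUnit (δ * δ) := ha ▸ (isUnit_iff_ne_zero.mpr ha0).map (algebraMap F K)
  exact ⟨δ, isUnit_of_mul_isUnit_left hsq, hskew⟩

end QuadraticAlgebra

section TensorConj

variable {F K E : Type} [Field F] [CommRing K] [Algebra F K] [CommRing E] [Algebra F E]

@[simp]
theorem tensorConj_tmul (conj : K →ₐ[F] K) (k : K) (e : E) :
    tensorConj conj (k ⊗ₜ[F] e) = conj k ⊗ₜ[F] e := by
  simp [tensorConj]

theorem tensorConj_tensorConj {conj : K →ₐ[F] K} (hconj : ∀ x, conj (conj x) = x)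
    (z : K ⊗[F] E) : tensorConj conj (tensorConj conj z) = z := by
  induction z using TensorProduct.induction_on with
  | zero => simp
  | tmul k e => simp [hconj]
  | add x y hx hy => simp only [map_add, hx, hy]

theorem adjoin_normOneGroup_tensorConj_eq_top [Infinite F] [Module.Finite F K]
    [Module.Finite F E] (hchar : (2 : F) ≠ 0) {conj : K →ₐ[F] K}
    (hconj : ∀ x, conj (conj x) = x) {δ : K} (hδ : IsUnit δ) (hδ_skew : conj δ = -δ) :
    Algebra.adjoin K
      (Units.val '' (normOneGroup (tensorConj (E := E) conj) : Set (K ⊗[F] E)ˣ)) = ⊤ := by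
  set T := Algebra.adjoin K
    (Units.val '' (normOneGroup (tensorConj (E := E) conj) : Set (K ⊗[F] E)ˣ))
  have hT : ∀ x ∈ normOneGroup (tensorConj (E := E) conj),
      (x : K ⊗[F] E) ∈ T.restrictScalars F :=
    fun x hx => (Subalgebra.mem_restrictScalars F).mpr (Algebra.subset_adjoin ⟨x, hx, rfl⟩)
  have hskew : ∀ e : E, δ ⊗ₜ[F] e ∈ T := fun e =>
    mem_of_normOneGroup_subset_of_map_eq_neg hchar (tensorConj_tensorConj hconj)
      (T.restrictScalars F) hT (by simp [hδ_skew, TensorProduct.neg_tmul])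
  rw [eq_top_iff]
  intro z _
  induction z using TensorProduct.induction_on with
  | zero => exact T.zero_mem
  | tmul k e =>
    have : k ⊗ₜ[F] e = (k * hδ.unit⁻¹.val) • (δ ⊗ₜ[F] e) := by
      rw [TensorProduct.smul_tmul', smul_eq_mul, mul_assoc, hδ.val_inv_mul, mul_one]
    exact this ▸ T.smul_mem (hskew e) _
  | add x y hx hy => exact T.add_mem (hx trivial) (hy trivial)

end TensorConj

section TraceForm

variable {F K E : Type} [Field F] [CommRing K] [Algebra F K] [CommRing E] [Algebra F E]
  [Module.Finite F E]

theorem trace_one_tmul (x : E) :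
    Algebra.trace K (K ⊗[F] E) (1 ⊗ₜ[F] x) = algebraMap F K (Algebra.trace F E x) := by
  rw [Algebra.trace_apply, Algebra.trace_apply, ← Algebra.baseChange_lmul,
    LinearMap.trace_baseChange]

theorem eq_zero_of_forall_trace_mul_eq_zero
    (hEet : ∀ x : E, x ≠ 0 → ∃ y : E, Algebra.trace F E (x * y) ≠ 0) {ε : K ⊗[F] E}
    (hε : ∀ u, Algebra.trace K (K ⊗[F] E) (ε * u) = 0) : ε = 0 := by
  classical
  let b := Module.Free.chooseBasis F E
  let b' := Algebra.TensorProduct.basis K b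
  have hsep : (Algebra.traceForm F E).SeparatingLeft := fun x hx => by
    by_contra hx0
    obtain ⟨y, hy⟩ := hEet x hx0
    exact hy (hx y)
  have hdet : IsUnit (Algebra.traceMatrix F b).det := by
    rw [isUnit_iff_ne_zero, ← Matrix.nondegenerate_iff_det_ne_zero,
      Matrix.nondegenerate_iff_separatingLeft, Algebra.traceMatrix_of_basis]
    exact LinearMap.BilinForm.SeparatingLeft.toMatrix hsep b
  have hmat : Algebra.traceMatrix K b' = (Algebra.traceMatrix F b).map (algebraMap F K) := by
    ext i j
    simp [b', Algebra.traceMatrix_apply, trace_one_tmul]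
  have hunit : IsUnit (Algebra.traceMatrix K b') := by
    rw [hmat, Matrix.isUnit_iff_isUnit_det]
    simpa [RingHom.map_det] using hdet.map (algebraMap F K)
  have hcoord : b'.equivFun ε = 0 := Matrix.mulVec_injective_of_isUnit hunit <| by
    rw [Algebra.traceMatrix_of_basis_mulVec, Matrix.mulVec_zero]
    exact funext fun i => hε _
  simpa using congrArg b'.equivFun.symm hcoord

end TraceForm

theorem LinearMap.apply_eq_mul_apply_one_of_adjoin_eq_top {R A : Type*} [CommRing R] [CommRing A]
    [Algebra R A] {s : Set A} (hs : Algebra.adjoin R s = ⊤) (f : A →ₗ[R] A)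
    (hf : ∀ x ∈ s, ∀ v, f (x * v) = x * f v) (z : A) : f z = z * f 1 := by
  have hle : Algebra.adjoin R s ≤ (Subalgebra.centralizer R {f}).comap (Algebra.lmul R A) :=
    Algebra.adjoin_le fun x hx => (Subalgebra.mem_centralizer_iff R).mpr fun g hg => by
      rw [Set.mem_singleton_iff.mp hg]
      exact LinearMap.ext fun v => hf x hx v
  have hz : Algebra.lmul R A z ∈ Subalgebra.centralizer R {f} := hle (hs ▸ Algebra.mem_top)
  simpa using LinearMap.congr_fun ((Subalgebra.mem_centralizer_iff R).mp hz f rfl) 1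

section Isometry

variable {F K E : Type} [Field F] [CommRing K] [Algebra F K] [CommRing E] [Algebra F E]
  [Module.Finite F E] {conj : K →ₐ[F] K}

theorem exists_eq_mul_norm_of_isometry_of_commute
    (hadj : Algebra.adjoin K
      (Units.val '' (normOneGroup (tensorConj (E := E) conj) : Set (K ⊗[F] E)ˣ)) = ⊤)
    (hEet : ∀ x : E, x ≠ 0 → ∃ y : E, Algebra.trace F E (x * y) ≠ 0)
    {μ μ' : K ⊗[F] E} (t : (K ⊗[F] E) ≃ₗ[K] (K ⊗[F] E))
    (hiso : ∀ u v, hermFormOf conj μ' (t u) (t v) = hermFormOf conj μ u v)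
    (hcomm : ∀ x ∈ normOneGroup (tensorConj (E := E) conj), ∀ v, t (x * v) = x * t v) :
    ∃ y : (K ⊗[F] E)ˣ, μ = μ' * ((y : K ⊗[F] E) * tensorConj conj (y : K ⊗[F] E)) := by
  have ht : ∀ z, t z = z * t 1 :=
    t.toLinearMap.apply_eq_mul_apply_one_of_adjoin_eq_top hadj (by
      rintro _ ⟨x, hx, rfl⟩ v
      exact hcomm x hx v)
  obtain ⟨z, hz⟩ := t.surjective 1
  have hc : IsUnit (t 1) := IsUnit.of_mul_eq_one z (by rw [mul_comm, ← ht, hz])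
  refine ⟨hc.unit, eq_of_sub_eq_zero (eq_zero_of_forall_trace_mul_eq_zero hEet fun u => ?_)⟩
  have h := hiso u 1
  simp only [hermFormOf, ht u, map_one, mul_one] at h
  rw [IsUnit.unit_spec, sub_mul, map_sub, ← h, sub_eq_zero]
  congr 1
  ring

end Isometry

section Embeddings

variable {F K E V : Type} [Field F] [CommRing K] [Algebra F K] [CommRing E] [Algebra F E]
  [AddCommGroup V] [Module K V] {conj : K →ₐ[F] K} {B : V → V → K}

def Realizes (a : ReprType F K E V conj B) (ι : EmbType F K E V conj B) : Prop :=
  ∃ r : (K ⊗[F] E) ≃ₗ[K] V, IsIsometryTo F K E V conj B a.val r ∧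
    ∀ (x : normOneGroup (tensorConj conj)) (v : K ⊗[F] E), (ι.val x) (r v) = r (x.val.val * v)

theorem exists_realizes (a : ReprType F K E V conj B) : ∃ ι, Realizes a ι := by
  obtain ⟨r, hr⟩ := a.2
  let ι : EmbType F K E V conj B :=
    ⟨fun x => r.symm ≪≫ₗ x.val.mulLeftLinearEquiv K (K ⊗[F] E) ≪≫ₗ r, a.1, r, hr,
      fun x v => by simp⟩
  exact ⟨ι, r, hr, fun x v => by simp [ι]⟩

theorem exists_realizes_left (ι : EmbType F K E V conj B) : ∃ a, Realizes a ι := by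
  obtain ⟨lam, r, hr, hι⟩ := ι.2
  exact ⟨⟨lam, r, hr⟩, r, hr, hι⟩

theorem Realizes.realizes_iff_conjRel {a : ReprType F K E V conj B}
    {ι ι' : EmbType F K E V conj B} (hι : Realizes a ι) :
    Realizes a ι' ↔ conjRel F K E V conj B ι ι' := by
  obtain ⟨r, hr, hrι⟩ := hι
  constructor
  · rintro ⟨r', hr', hrι'⟩
    refine ⟨r.symm ≪≫ₗ r', fun u v => ?_, fun x => LinearEquiv.ext fun v => ?_⟩
    · obtain ⟨u, rfl⟩ := r.surjective u
      obtain ⟨v, rfl⟩ := r.surjective v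
      simp only [LinearEquiv.trans_apply, LinearEquiv.symm_apply_apply]
      rw [hr, hr']
    · obtain ⟨v, rfl⟩ := r'.surjective v
      change _ = r' (r.symm (ι.val x (r (r'.symm (r' v)))))
      simp [hrι, hrι']
  · rintro ⟨h, hh, hhι⟩
    refine ⟨r ≪≫ₗ h, fun u v => ?_, fun x v => ?_⟩
    · simp [hh, hr u v]
    · change ι'.val x (h (r v)) = h (r _)
      rw [hhι]
      change h (ι.val x (h.symm (h (r v)))) = _
      rw [h.symm_apply_apply, hrι]

theorem Realizes.realizes_iff_normRel [Module.Finite F E]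
    (hadj : Algebra.adjoin K
      (Units.val '' (normOneGroup (tensorConj (E := E) conj) : Set (K ⊗[F] E)ˣ)) = ⊤)
    (hEet : ∀ x : E, x ≠ 0 → ∃ y : E, Algebra.trace F E (x * y) ≠ 0)
    {a a' : ReprType F K E V conj B} {ι : EmbType F K E V conj B} (hι : Realizes a ι) :
    Realizes a' ι ↔ normRel F K E V conj B a a' := by
  obtain ⟨r, hr, hrι⟩ := hι
  constructor
  · rintro ⟨r', hr', hrι'⟩
    refine exists_eq_mul_norm_of_isometry_of_commute hadj hEet (r' ≪≫ₗ r.symm)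
      (fun u v => ?_) (fun x hx v => ?_)
    · simp only [LinearEquiv.trans_apply]
      rw [← hr, ← hr', LinearEquiv.apply_symm_apply, LinearEquiv.apply_symm_apply]
    · obtain ⟨w, hw⟩ := r.surjective (r' v)
      simp only [LinearEquiv.trans_apply]
      rw [← hrι' ⟨x, hx⟩, ← hw, hrι, LinearEquiv.symm_apply_apply,
        LinearEquiv.symm_apply_apply]
  · rintro ⟨y, hy⟩
    refine ⟨y.mulLeftLinearEquiv K (K ⊗[F] E) ≪≫ₗ r, fun u v => ?_, fun x v => ?_⟩
    · simp only [LinearEquiv.trans_apply, Units.mulLeftLinearEquiv_apply, hr _ _, hermFormOf, hy,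
        map_mul]
      congr 1
      ring
    · simp only [LinearEquiv.trans_apply, Units.mulLeftLinearEquiv_apply, hrι, mul_left_comm]

end Embeddings

theorem stmt16_general (F K E V : Type) [Field F] [Infinite F] [CommRing K] [Algebra F K]
    [CommRing E] [Algebra F E] [AddCommGroup V] [Module K V]
    (hchar : (2 : F) ≠ 0)
    (hK2 : Module.finrank F K = 2)
    (hKet : ∀ x : K, x ≠ 0 → ∃ y : K, Algebra.trace F K (x * y) ≠ 0)
    (conj : K →ₐ[F] K)
    (hconj : ∀ x, conj (conj x) = x)
    (hfix : ∀ x : K, conj x = x ↔ ∃ a : F, algebraMap F K a = x)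
    [Module.Finite F E]
    (hEet : ∀ x : E, x ≠ 0 → ∃ y : E, Algebra.trace F E (x * y) ≠ 0)
    (B : V → V → K) :
    ∃ Φ : Quot (normRel F K E V conj B) ≃ Quot (conjRel F K E V conj B),
      ∀ (a : ReprType F K E V conj B) (b : EmbType F K E V conj B),
        Φ (Quot.mk _ a) = Quot.mk _ b ↔
          ∃ r : (K ⊗[F] E) ≃ₗ[K] V, IsIsometryTo F K E V conj B a.val r ∧
            ∀ (x : normOneGroup (tensorConj conj)) (v : K ⊗[F] E),
              (b.val x) (r v) = r (x.val.val * v) := by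
  have : Module.Finite F K := Module.finite_of_finrank_eq_succ hK2
  obtain ⟨δ, hδ, hδ_skew⟩ := exists_isUnit_map_eq_neg hK2 hKet hconj hfix
  have hadj := adjoin_normOneGroup_tensorConj_eq_top (E := E) hchar hconj hδ hδ_skew
  exact Quot.exists_equiv_iff_of_rel Realizes exists_realizes exists_realizes_left
    (fun hι => hι.realizes_iff_normRel hadj hEet) (fun hι => hι.realizes_iff_conjRel)

/-- There is a natural bijection between the set
`{[λ] ∈ E×/N_{K_E/E}(K_E×) : V_{E,λ} ≅ V}` and the set of admissible embeddings
`K_E¹ → U(V)` modulo `U(V)`-conjugation, sending `[λ]` to the class of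
`x ↦ r ∘ M_x ∘ r⁻¹` for any isometry `r : V_{E,λ} → V`. -/
theorem stmt16 (F K E V : Type) [Field F] [Infinite F] [CommRing K] [Algebra F K]
    [CommRing E] [Algebra F E] [AddCommGroup V] [Module K V] (n : ℕ)
    (hchar : (2 : F) ≠ 0)
    (hK2 : Module.finrank F K = 2)
    (hKet : ∀ x : K, x ≠ 0 → ∃ y : K, Algebra.trace F K (x * y) ≠ 0)
    (conj : K →ₐ[F] K)
    (hconj : ∀ x, conj (conj x) = x)
    (hfix : ∀ x : K, conj x = x ↔ ∃ a : F, algebraMap F K a = x)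
    [Module.Finite F E] (hEn : Module.finrank F E = n)
    (hEet : ∀ x : E, x ≠ 0 → ∃ y : E, Algebra.trace F E (x * y) ≠ 0)
    (B : V → V → K)
    (hherm : ∀ x y, B x y = conj (B y x))
    (haddl : ∀ x x' y, B (x + x') y = B x y + B x' y)
    (hsmull : ∀ (a : K) (x y : V), B (a • x) y = a * B x y)
    (hnd : ∀ x : V, x ≠ 0 → ∃ y, B x y ≠ 0)
    (hVn : Module.finrank K V = n) :
    ∃ Φ : Quot (normRel F K E V conj B) ≃ Quot (conjRel F K E V conj B),
      ∀ (a : ReprType F K E V conj B) (b : EmbType F K E V conj B),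
        Φ (Quot.mk _ a) = Quot.mk _ b ↔
          ∃ r : (K ⊗[F] E) ≃ₗ[K] V, IsIsometryTo F K E V conj B a.val r ∧
            ∀ (x : normOneGroup (tensorConj conj)) (v : K ⊗[F] E),
              (b.val x) (r v) = r (x.val.val * v) :=
  stmt16_general F K E V hchar hK2 hKet conj hconj hfix hEet B
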